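/- Let a, b, c ∈ ℝ² be three points not lying on a common line and let W(u) = |u−a|²|u−b|²|u−c|². Every bounded entire C² solution u : ℝⁿ → ℝ² of Δu = ∇W(u) satisfies u(x) ∈ T for all x ∈ ℝⁿ, where T is the closed triangle with vertices a, b, c. -/

import Mathlib

/-- Componentwise Laplacian of a map `ℝⁿ → ℝᵐ`. -/
noncomputable def vectorLaplacian {n m : ℕ}
    (u : EuclideanSpace ℝ (Fin n) → EuclideanSpace ℝ (Fin m))
    (x : EuclideanSpace ℝ (Fin n)) : EuclideanSpace ℝ (Fin m) :=
  ∑ i : Fin n, fderiv ℝ (fun y => fderiv ℝ u y (EuclideanSpace.single i 1)) x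
    (EuclideanSpace.single i 1)

/-!
Suppose `u x₀ ∉ T` and separate it from `T` by a continuous functional: `ℓ < s` on `T` and
`s < ℓ (u x₀)`. The gradient `∇W(v)` is a combination of `v - a`, `v - b`, `v - c` with
nonnegative weights whose sum is bounded below by some `κ/2 > 0` (distinct vertices cannot all
be close to `v`). Where `ℓ v > s`, each `ℓ (v - p)` is at least `ℓ v - s`, so `f = ℓ ∘ u` satisfies
`Δf ≥ κ (f - s)` on `{f > s}`. A bounded-above subsolution of this kind is `≤ s` everywhere:
at a maximum point `y` of `f - η ‖· - x₀‖²` (which exists since `f` is bounded above) we get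
`κ (f x₀ - s) ≤ κ (f y - s) ≤ Δf y ≤ 2 η dim`, which fails for small `η`.
-/

open Filter Topology Laplacian InnerProductSpace

lemma IsLocalMax.deriv_deriv_nonpos {f : ℝ → ℝ} {x₀ : ℝ} (h : IsLocalMax f x₀)
    (hc : ContinuousAt f x₀) : deriv (deriv f) x₀ ≤ 0 := by
  by_contra! hpos
  -- the second derivative test would make `x₀` a local minimum too, so `f` is locally constant
  have hconst : f =ᶠ[𝓝 x₀] fun _ => f x₀ :=
    (h.and (isLocalMin_of_deriv_deriv_pos hpos h.deriv_eq_zero hc)).mono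
      fun x hx => le_antisymm hx.1 hx.2
  have hderiv : deriv f =ᶠ[𝓝 x₀] fun _ => 0 := by
    filter_upwards [hconst.eventuallyEq_nhds] with x hx
    rw [hx.deriv_eq, deriv_const]
  rw [hderiv.deriv_eq, deriv_const] at hpos
  exact hpos.false

lemma IsLocalMax.iteratedFDeriv_two_nonpos {E : Type*} [NormedAddCommGroup E] [NormedSpace ℝ E]
    {w : E → ℝ} {y : E} (h : IsLocalMax w y) (hw : ContDiff ℝ 2 w) (v : E) :
    iteratedFDeriv ℝ 2 w y (fun _ => v) ≤ 0 := by
  set L := ContinuousLinearMap.toSpanSingleton ℝ v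
  have hwy : ContDiff ℝ 2 fun z => w (y + z) := hw.comp (contDiff_const.add contDiff_id)
  have hline : deriv (deriv ((fun z => w (y + z)) ∘ L)) 0 =
      iteratedFDeriv ℝ 2 w y (fun _ => v) := by
    rw [← iteratedDeriv_one, ← iteratedDeriv_succ', iteratedDeriv_eq_iteratedFDeriv,
      L.iteratedFDeriv_comp_right hwy _ le_rfl, iteratedFDeriv_comp_add_left]
    simp [L]
  rw [← hline]
  refine IsLocalMax.deriv_deriv_nonpos ?_ (hwy.continuous.comp L.continuous).continuousAt
  have hL : Tendsto (fun t : ℝ => y + L t) (𝓝 0) (𝓝 y) :=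
    (continuous_const.add L.continuous).tendsto' 0 y (by simp)
  simpa [IsLocalMax, IsMaxFilter, L] using hL.eventually h

lemma Continuous.exists_forall_sub_mul_norm_sub_sq_le {E : Type*} [SeminormedAddCommGroup E]
    [ProperSpace E] {f : E → ℝ} (hf : Continuous f) (hbdd : BddAbove (Set.range f)) {η : ℝ}
    (hη : 0 < η) (x₀ : E) :
    ∃ y, ∀ x, f x - η * ‖x - x₀‖ ^ 2 ≤ f y - η * ‖y - x₀‖ ^ 2 := by
  obtain ⟨M, hM⟩ := hbdd
  have hfar : Tendsto (fun x => η * ‖x - x₀‖ ^ 2) (cocompact E) atTop := by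
    simpa [dist_eq_norm] using ((tendsto_pow_atTop two_ne_zero).comp
      (tendsto_dist_right_cocompact_atTop x₀)).const_mul_atTop hη
  refine (show Continuous fun x => f x - η * ‖x - x₀‖ ^ 2 by fun_prop).exists_forall_ge' x₀ ?_
  filter_upwards [hfar.eventually_ge_atTop (M - f x₀)] with x hx
  have := hM (Set.mem_range_self x)
  simp only [sub_self, norm_zero]
  linarith

section MaximumPrinciple

variable {E : Type*} [NormedAddCommGroup E] [InnerProductSpace ℝ E] [FiniteDimensional ℝ E]

lemma IsLocalMax.laplacian_nonpos {w : E → ℝ} {y : E} (h : IsLocalMax w y)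
    (hw : ContDiff ℝ 2 w) : Δ w y ≤ 0 := by
  rw [laplacian_eq_iteratedFDeriv_stdOrthonormalBasis]
  refine Finset.sum_nonpos fun i _ =>
    le_of_eq_of_le ?_ (h.iteratedFDeriv_two_nonpos hw (stdOrthonormalBasis ℝ E i))
  congr 1
  funext j
  fin_cases j <;> rfl

lemma laplacian_norm_sub_sq (p x : E) :
    Δ (fun z => ‖z - p‖ ^ 2) x = 2 * Module.finrank ℝ E := by
  have hd : fderiv ℝ (fderiv ℝ fun z : E => ‖z‖ ^ 2) = fun _ => 2 • innerSL ℝ := by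
    rw [fderiv_norm_sq]
    exact funext fun _ => ContinuousLinearMap.fderiv (2 • innerSL ℝ)
  rw [laplacian_eq_iteratedFDeriv_stdOrthonormalBasis]
  simp only [iteratedFDeriv_comp_sub (f := fun z : E => ‖z‖ ^ 2), iteratedFDeriv_two_apply, hd]
  change ∑ i, (2 : ℕ) • ⟪stdOrthonormalBasis ℝ E i, stdOrthonormalBasis ℝ E i⟫_ℝ = _
  simp [OrthonormalBasis.norm_eq_one, mul_comm]

theorem le_of_mul_sub_le_laplacian {f : E → ℝ} (hf : ContDiff ℝ 2 f)
    (hbdd : BddAbove (Set.range f)) {κ s : ℝ} (hκ : 0 < κ)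
    (hsub : ∀ x, s < f x → κ * (f x - s) ≤ Δ f x) (x₀ : E) : f x₀ ≤ s := by
  by_contra! hx₀
  set d : ℝ := (Module.finrank ℝ E : ℝ)
  set η := κ * (f x₀ - s) / (2 * d + 1)
  have hη : 0 < η := by positivity
  have hηd : η * (2 * d + 1) = κ * (f x₀ - s) := div_mul_cancel₀ _ (by positivity)
  set q : E → ℝ := fun x => ‖x - x₀‖ ^ 2
  have hq : ContDiff ℝ 2 q := (contDiff_id.sub contDiff_const).norm_sq ℝ
  have hηq : ContDiff ℝ 2 (η • q) := hq.const_smul η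
  obtain ⟨y, hy⟩ := hf.continuous.exists_forall_sub_mul_norm_sub_sq_le hbdd hη x₀
  have hfy : f x₀ ≤ f y := by
    linarith [hy x₀, (by simp : η * ‖x₀ - x₀‖ ^ 2 = 0), (by positivity : 0 ≤ η * ‖y - x₀‖ ^ 2)]
  have hmax : IsLocalMax (f - η • q) y := Filter.Eventually.of_forall hy
  have hΔ : Δ (f - η • q) y = Δ f y - η * (2 * d) := by
    rw [hf.contDiffAt.laplacian_sub hηq.contDiffAt, laplacian_smul η hq.contDiffAt,
      laplacian_norm_sub_sq, smul_eq_mul]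
  have hΔw := hmax.laplacian_nonpos (hf.sub hηq)
  have hΔf := hsub y (by linarith)
  have : κ * (f x₀ - s) ≤ κ * (f y - s) := by gcongr
  linarith

end MaximumPrinciple

section

variable {G : Type*} [SeminormedAddCommGroup G]

lemma half_le_norm_sub_or_half_le_norm_sub {p q : G} {δ : ℝ} (h : δ ≤ ‖p - q‖) (v : G) :
    δ / 2 ≤ ‖v - p‖ ∨ δ / 2 ≤ ‖v - q‖ := by
  by_contra! hpq
  have := norm_sub_le_norm_sub_add_norm_sub p v q
  rw [norm_sub_rev p v] at this
  linarith

lemma half_pow_four_le_sum_norm_sq_mul_norm_sq {a b c : G} {δ : ℝ} (hδ : 0 ≤ δ)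
    (hab : δ ≤ ‖a - b‖) (hac : δ ≤ ‖a - c‖) (hbc : δ ≤ ‖b - c‖) (v : G) :
    (δ / 2) ^ 4 ≤ ‖v - b‖ ^ 2 * ‖v - c‖ ^ 2 + ‖v - a‖ ^ 2 * ‖v - c‖ ^ 2
      + ‖v - a‖ ^ 2 * ‖v - b‖ ^ 2 := by
  have key : ∀ {x y : ℝ}, δ / 2 ≤ x → δ / 2 ≤ y → (δ / 2) ^ 4 ≤ x ^ 2 * y ^ 2 := by
    intro x y hx hy
    calc (δ / 2) ^ 4 = (δ / 2) ^ 2 * (δ / 2) ^ 2 := by ring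
      _ ≤ x ^ 2 * y ^ 2 := by gcongr
  have hPa : 0 ≤ ‖v - b‖ ^ 2 * ‖v - c‖ ^ 2 := by positivity
  have hPb : 0 ≤ ‖v - a‖ ^ 2 * ‖v - c‖ ^ 2 := by positivity
  have hPc : 0 ≤ ‖v - a‖ ^ 2 * ‖v - b‖ ^ 2 := by positivity
  rcases le_or_gt (δ / 2) ‖v - a‖ with ha | ha
  · rcases half_le_norm_sub_or_half_le_norm_sub hbc v with hb | hc
    · linarith [key ha hb]
    · linarith [key ha hc]
  · have hb := (half_le_norm_sub_or_half_le_norm_sub hab v).resolve_left ha.not_ge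
    have hc := (half_le_norm_sub_or_half_le_norm_sub hac v).resolve_left ha.not_ge
    linarith [key hb hc]

end

section ThreeWell

variable {F : Type*} [NormedAddCommGroup F] [InnerProductSpace ℝ F] [CompleteSpace F]

def threeWell (a b c v : F) : ℝ := ‖v - a‖ ^ 2 * ‖v - b‖ ^ 2 * ‖v - c‖ ^ 2

lemma hasGradientAt_threeWell (a b c v : F) :
    HasGradientAt (threeWell a b c)
      ((2 * (‖v - b‖ ^ 2 * ‖v - c‖ ^ 2)) • (v - a) + (2 * (‖v - a‖ ^ 2 * ‖v - c‖ ^ 2)) • (v - b)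
        + (2 * (‖v - a‖ ^ 2 * ‖v - b‖ ^ 2)) • (v - c)) v := by
  have hsq (p : F) := ((hasFDerivAt_id v).sub_const p).norm_sq
  rw [hasGradientAt_iff_hasFDerivAt]
  refine (((hsq a).mul (hsq b)).mul (hsq c)).congr_fderiv ?_
  ext w
  simp only [id_eq, Pi.mul_apply, map_sub, ContinuousLinearMap.comp_id, smul_add, add_apply,
    smul_apply, sub_apply, innerSL_apply_apply, nsmul_eq_mul, Nat.cast_ofNat, smul_eq_mul, map_add,
    map_smul, toDual_apply_apply]
  ring

lemma mul_sub_le_map_gradient_threeWell {a b c : F} {δ : ℝ} (hδ : 0 ≤ δ)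
    (hab : δ ≤ ‖a - b‖) (hac : δ ≤ ‖a - c‖) (hbc : δ ≤ ‖b - c‖) (ℓ : StrongDual ℝ F) {s : ℝ}
    (ha : ℓ a ≤ s) (hb : ℓ b ≤ s) (hc : ℓ c ≤ s) {v : F} (hv : s ≤ ℓ v) :
    2 * (δ / 2) ^ 4 * (ℓ v - s) ≤ ℓ (gradient (threeWell a b c) v) := by
  rw [(hasGradientAt_threeWell a b c v).gradient]
  simp only [map_add, map_smul, map_sub, smul_eq_mul]
  have hsum := half_pow_four_le_sum_norm_sq_mul_norm_sq hδ hab hac hbc v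
  calc 2 * (δ / 2) ^ 4 * (ℓ v - s)
      ≤ 2 * (‖v - b‖ ^ 2 * ‖v - c‖ ^ 2 + ‖v - a‖ ^ 2 * ‖v - c‖ ^ 2
          + ‖v - a‖ ^ 2 * ‖v - b‖ ^ 2) * (ℓ v - s) := by gcongr
    _ = 2 * (‖v - b‖ ^ 2 * ‖v - c‖ ^ 2) * (ℓ v - s) + 2 * (‖v - a‖ ^ 2 * ‖v - c‖ ^ 2) * (ℓ v - s)
          + 2 * (‖v - a‖ ^ 2 * ‖v - b‖ ^ 2) * (ℓ v - s) := by ring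
    _ ≤ _ := by gcongr

theorem mem_convexHull_of_laplacian_eq_gradient_threeWell {E : Type*} [NormedAddCommGroup E]
    [InnerProductSpace ℝ E] [FiniteDimensional ℝ E] {a b c : F} (hab : a ≠ b) (hac : a ≠ c)
    (hbc : b ≠ c) {u : E → F} (hu : ContDiff ℝ 2 u) (hbdd : ∃ C : ℝ, ∀ x, ‖u x‖ ≤ C)
    (hsol : ∀ x, Δ u x = gradient (threeWell a b c) (u x)) (x : E) :
    u x ∈ convexHull ℝ {a, b, c} := by
  by_contra hx
  have hclosed : IsClosed (convexHull ℝ ({a, b, c} : Set F)) :=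
    ((Set.toFinite _).isCompact_convexHull (𝕜 := ℝ)).isClosed
  obtain ⟨ℓ, s, hT, hs⟩ := geometric_hahn_banach_closed_point (convex_convexHull ℝ _) hclosed hx
  have hvertex (p : F) (hp : p ∈ ({a, b, c} : Set F)) : ℓ p ≤ s :=
    (hT p (subset_convexHull ℝ _ hp)).le
  obtain ⟨C, hC⟩ := hbdd
  have hℓu : BddAbove (Set.range (ℓ ∘ u)) := ⟨‖ℓ‖ * C, by
    rintro _ ⟨y, rfl⟩
    exact (le_abs_self _).trans ((ℓ.le_opNorm _).trans (by gcongr; exact hC y))⟩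
  set δ := min (min ‖a - b‖ ‖a - c‖) ‖b - c‖
  have hδ : 0 < δ := by simp [δ, sub_ne_zero, hab, hac, hbc]
  refine hs.not_ge (le_of_mul_sub_le_laplacian (ℓ.contDiff.comp hu) hℓu
    (by positivity : 0 < 2 * (δ / 2) ^ 4) (fun y hy => ?_) x)
  rw [hu.contDiffAt.laplacian_CLM_comp_left, Function.comp_apply, Function.comp_apply, hsol]
  exact mul_sub_le_map_gradient_threeWell hδ.le (by simp [δ]) (by simp [δ]) (by simp [δ]) ℓ
    (hvertex a (by simp)) (hvertex b (by simp)) (hvertex c (by simp)) hy.le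

end ThreeWell

lemma vectorLaplacian_eq_laplacian {n m : ℕ}
    {u : EuclideanSpace ℝ (Fin n) → EuclideanSpace ℝ (Fin m)} (hu : ContDiff ℝ 2 u)
    (x : EuclideanSpace ℝ (Fin n)) : vectorLaplacian u x = Δ u x := by
  have hdu : Differentiable ℝ (fderiv ℝ u) :=
    (hu.fderiv_right (m := 1) le_rfl).differentiable one_ne_zero
  rw [laplacian_eq_iteratedFDeriv_orthonormalBasis u (EuclideanSpace.basisFun (Fin n) ℝ),
    vectorLaplacian]
  refine Finset.sum_congr rfl fun i _ => ?_
  rw [iteratedFDeriv_two_apply, fderiv_clm_apply (hdu x) (differentiableAt_const _)]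
  simp

theorem allen_cahn_triangle_confinement {n : ℕ}
    (a b c : EuclideanSpace ℝ (Fin 2))
    (habc : ¬ Collinear ℝ ({a, b, c} : Set (EuclideanSpace ℝ (Fin 2))))
    (W : EuclideanSpace ℝ (Fin 2) → ℝ)
    (hW : W = fun v => ‖v - a‖ ^ 2 * ‖v - b‖ ^ 2 * ‖v - c‖ ^ 2)
    (u : EuclideanSpace ℝ (Fin n) → EuclideanSpace ℝ (Fin 2))
    (hu : ContDiff ℝ 2 u) (hbdd : ∃ C : ℝ, ∀ x, ‖u x‖ ≤ C)
    (hsol : ∀ x, vectorLaplacian u x = gradient W (u x)) :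
    ∀ x, u x ∈ convexHull ℝ ({a, b, c} : Set (EuclideanSpace ℝ (Fin 2))) := by
  subst hW
  exact mem_convexHull_of_laplacian_eq_gradient_threeWell (ne₁₂_of_not_collinear habc)
    (ne₁₃_of_not_collinear habc) (ne₂₃_of_not_collinear habc) hu hbdd
    fun x => (vectorLaplacian_eq_laplacian hu x).symm.trans (hsol x)
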